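/- arXiv:2007.00918 — 6 statements merged into one kernel-verified Lean document; each statement's English description precedes it below -/
import Mathlib

section
/- Let b : ℝ² → ℝ² be a vector field (identified with a complex-valued function) differentiable at a point z. Then, writing ∂b(z) and ∂̄b(z) for the complex derivatives, for all nonzero h,k ∈ ℂ one has ⟨b(z+h) − b(z), h̄⟩/|h|² − ⟨b(z+k) − b(z), k̄⟩/|k|² = Re(∂b(z)(h²/|h|² − k²/|k|²)) + o(1) as |h| = |k| → 0; consequently the limsup as |h| = |k| → 0 of the supremum of the left-hand side over all such h, k equals 2|∂b(z)|. -/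
/-!
Write the differential as `Db(z) h = ∂b(z) h + ∂̄b(z) h̄`. For the linear part the quotient is
`Re (∂b(z) h² / |h|²) + Re ∂̄b(z)`, and differentiability perturbs it by `o(1)` uniformly on the
circle `|h| = r`. The constant `Re ∂̄b(z)` cancels in differences, while `Re (∂b(z) h² / |h|²)`
ranges over `[-|∂b(z)|, |∂b(z)|]`, both ends attained at `h` and `i h` once `h²` is aligned with
the conjugate of `∂b(z)`. Hence the oscillation over the circle of radius `r` tends to `2 |∂b(z)|`.
-/

open Complex ComplexConjugate Filter Topology

/-- `∂b(z)` and `∂̄b(z)` are `wirtingerDeriv L` and `conjWirtingerDeriv L` for `L = Db(z)`. -/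
noncomputable def wirtingerDeriv (L : ℂ →L[ℝ] ℂ) : ℂ := (L 1 - I * L I) / 2

noncomputable def conjWirtingerDeriv (L : ℂ →L[ℝ] ℂ) : ℂ := (L 1 + I * L I) / 2

theorem ContinuousLinearMap.apply_eq_wirtingerDeriv_mul_add (L : ℂ →L[ℝ] ℂ) (h : ℂ) :
    L h = wirtingerDeriv L * h + conjWirtingerDeriv L * conj h := by
  have hL : L h = (h.re : ℂ) * L 1 + (h.im : ℂ) * L I := by
    conv_lhs => rw [← re_add_im h, ← real_smul, ← mul_one (h.re : ℂ), ← real_smul, map_add,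
      map_smul, map_smul, real_smul, real_smul]
  have hconj : conj h = h.re - h.im * I := by simp [Complex.ext_iff]
  rw [hL, hconj, wirtingerDeriv, conjWirtingerDeriv]
  linear_combination (L 1 - I * L I) / 2 * re_add_im h + (h.im * L I) * I_sq

/-- The paper's `Q̄_b(z, h)` is `barQ (fun h ↦ b (z + h) - b z) h`; note `⟨w, h̄⟩ = Re (w * h)`. -/
noncomputable def barQ (g : ℂ → ℂ) (h : ℂ) : ℝ := (g h * h).re / ‖h‖ ^ 2

lemma abs_barQ_sub_barQ_le (f g : ℂ → ℂ) (h : ℂ) :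
    |barQ f h - barQ g h| ≤ ‖f h - g h‖ / ‖h‖ := by
  rcases eq_or_ne h 0 with rfl | hh
  · simp [barQ]
  calc |barQ f h - barQ g h| = |((f h - g h) * h).re| / ‖h‖ ^ 2 := by
        rw [barQ, barQ, ← sub_div, abs_div, abs_of_nonneg (sq_nonneg ‖h‖), sub_mul, sub_re]
    _ ≤ ‖(f h - g h) * h‖ / ‖h‖ ^ 2 := by gcongr; exact abs_re_le_norm _
    _ = ‖f h - g h‖ / ‖h‖ := by rw [norm_mul]; field_simp

lemma barQ_continuousLinearMap (L : ℂ →L[ℝ] ℂ) {h : ℂ} (hh : h ≠ 0) :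
    barQ L h = (wirtingerDeriv L * h ^ 2).re / ‖h‖ ^ 2 + (conjWirtingerDeriv L).re := by
  have hconj : conj h * h = (‖h‖ ^ 2 : ℝ) := by
    rw [mul_comm, mul_conj, normSq_eq_norm_sq, ofReal_pow]
  have hmul : L h * h = wirtingerDeriv L * h ^ 2 + conjWirtingerDeriv L * (‖h‖ ^ 2 : ℝ) := by
    rw [L.apply_eq_wirtingerDeriv_mul_add, ← hconj]; ring
  rw [barQ, hmul, add_re, mul_comm (conjWirtingerDeriv L), re_ofReal_mul]
  field_simp

lemma abs_re_mul_sq_div_norm_sq_le (p h : ℂ) : |(p * h ^ 2).re / ‖h‖ ^ 2| ≤ ‖p‖ := by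
  rcases eq_or_ne h 0 with rfl | hh
  · simp
  rw [abs_div, abs_of_nonneg (sq_nonneg ‖h‖), div_le_iff₀ (by positivity)]
  calc |(p * h ^ 2).re| ≤ ‖p * h ^ 2‖ := abs_re_le_norm _
    _ = ‖p‖ * ‖h‖ ^ 2 := by rw [norm_mul, norm_pow]

lemma exists_norm_eq_one_re_mul_sq_eq_norm (p : ℂ) : ∃ u : ℂ, ‖u‖ = 1 ∧ (p * u ^ 2).re = ‖p‖ := by
  refine ⟨exp (↑(-p.arg / 2) * I), norm_exp_ofReal_mul_I _, ?_⟩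
  have hsq : exp (↑(-p.arg / 2) * I) ^ 2 * exp (p.arg * I) = 1 := by
    rw [← exp_nat_mul, ← exp_add]; push_cast; ring_nf; exact exp_zero
  have hp : p * exp (↑(-p.arg / 2) * I) ^ 2 = ‖p‖ := by
    nth_rewrite 1 [← norm_mul_exp_arg_mul_I p]
    linear_combination (‖p‖ : ℂ) * hsq
  rw [hp, ofReal_re]

noncomputable def barQOscillation (g : ℂ → ℂ) (r : ℝ) : ℝ :=
  sSup {v : ℝ | ∃ h k : ℂ, ‖h‖ = r ∧ ‖k‖ = r ∧ v = |barQ g h - barQ g k|}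

section Oscillation

variable {g : ℂ → ℂ} {L : ℂ →L[ℝ] ℂ} {r ε : ℝ}

lemma abs_barQ_sub_le_of_norm_sub_le (hr : 0 < r)
    (hg : ∀ h : ℂ, ‖h‖ = r → ‖g h - L h‖ ≤ ε * r) {h : ℂ} (hh : ‖h‖ = r) :
    |barQ g h - ((wirtingerDeriv L * h ^ 2).re / ‖h‖ ^ 2 + (conjWirtingerDeriv L).re)| ≤ ε := by
  rw [← barQ_continuousLinearMap L (norm_pos_iff.mp (hh ▸ hr))]
  calc |barQ g h - barQ L h| ≤ ‖g h - L h‖ / ‖h‖ := abs_barQ_sub_barQ_le g L h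
    _ ≤ ε := by rw [div_le_iff₀ (hh ▸ hr), hh]; exact hg h hh

theorem abs_barQOscillation_sub_le (hr : 0 < r)
    (hg : ∀ h : ℂ, ‖h‖ = r → ‖g h - L h‖ ≤ ε * r) :
    |barQOscillation g r - 2 * ‖wirtingerDeriv L‖| ≤ 2 * ε := by
  rw [barQOscillation]
  set S := {v : ℝ | ∃ h k : ℂ, ‖h‖ = r ∧ ‖k‖ = r ∧ v = |barQ g h - barQ g k|}
  set p := wirtingerDeriv L
  have approx := fun h (hh : ‖h‖ = r) ↦ abs_le.mp (abs_barQ_sub_le_of_norm_sub_le hr hg hh)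
  have bound := fun h : ℂ ↦ abs_le.mp (abs_re_mul_sq_div_norm_sq_le p h)
  have upper : ∀ v ∈ S, v ≤ 2 * ‖p‖ + 2 * ε := by
    rintro v ⟨h, k, hh, hk, rfl⟩
    have := approx h hh; have := approx k hk; have := bound h; have := bound k
    exact abs_le.mpr ⟨by linarith, by linarith⟩
  obtain ⟨u, hu, hpu⟩ := exists_norm_eq_one_re_mul_sq_eq_norm p
  have hh₀ : ‖(r : ℂ) * u‖ = r := by simp [hu, hr.le]
  have hk₀ : ‖(r : ℂ) * u * I‖ = r := by simp [hu, hr.le]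
  have hx : (p * (r * u) ^ 2).re / ‖(r : ℂ) * u‖ ^ 2 = ‖p‖ := by
    rw [hh₀, mul_pow, ← ofReal_pow, mul_left_comm, re_ofReal_mul, hpu]; field_simp
  have hy : (p * (r * u * I) ^ 2).re / ‖(r : ℂ) * u * I‖ ^ 2 = -‖p‖ := by
    rw [hk₀, mul_pow, I_sq, mul_pow, ← ofReal_pow, mul_neg_one, mul_neg, neg_re,
      mul_left_comm, re_ofReal_mul, hpu]; field_simp
  have hmem : |barQ g (r * u) - barQ g (r * u * I)| ∈ S := ⟨_, _, hh₀, hk₀, rfl⟩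
  have lower : 2 * ‖p‖ - 2 * ε ≤ |barQ g (r * u) - barQ g (r * u * I)| := by
    have hh₀_approx := approx _ hh₀
    have hk₀_approx := approx _ hk₀
    rw [hx] at hh₀_approx
    rw [hy] at hk₀_approx
    linarith [le_abs_self (barQ g (r * u) - barQ g (r * u * I))]
  rw [abs_le]
  constructor
  · linarith [le_csSup ⟨_, upper⟩ hmem]
  · linarith [csSup_le ⟨_, hmem⟩ upper]

theorem tendsto_barQOscillation (hg : (fun h ↦ g h - L h) =o[𝓝 0] fun h ↦ h) :
    Tendsto (barQOscillation g) (𝓝[>] 0) (𝓝 (2 * ‖wirtingerDeriv L‖)) := by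
  rw [Metric.tendsto_nhds]
  intro ε hε
  obtain ⟨δ, hδ, hsmall⟩ := Metric.eventually_nhds_iff.mp (hg.def (by positivity : 0 < ε / 4))
  filter_upwards [Ioo_mem_nhdsGT hδ] with r hr
  have hg_r : ∀ h : ℂ, ‖h‖ = r → ‖g h - L h‖ ≤ ε / 4 * r := fun h hh ↦
    hh ▸ hsmall (by rw [dist_zero_right, hh]; exact hr.2)
  have := abs_barQOscillation_sub_le hr.1 hg_r
  rw [Real.dist_eq]
  linarith

end Oscillation

/-- If `b : ℂ → ℂ` is (real-)differentiable at `z`, then the limsup as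
`|h| = |k| → 0` of the supremum over such `h, k` of
`|⟨b(z+h)−b(z), h̄⟩/|h|² − ⟨b(z+k)−b(z), k̄⟩/|k|²|` equals `2|∂b(z)|`,
where `∂b(z) = (L 1 − i·L i)/2` with `L = Db(z)` and
`⟨w, h̄⟩ = Re(w·h)`. -/
theorem barQ_pointwise_limsup (b : ℂ → ℂ) (z : ℂ) (hb : DifferentiableAt ℝ b z) :
    Filter.limsup
      (fun r : ℝ => sSup {v : ℝ | ∃ h k : ℂ, ‖h‖ = r ∧ ‖k‖ = r ∧
        v = |((b (z + h) - b z) * h).re / ‖h‖ ^ 2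
              - ((b (z + k) - b z) * k).re / ‖k‖ ^ 2|})
      (nhdsWithin 0 (Set.Ioi 0))
    = 2 * ‖(fderiv ℝ b z 1 - Complex.I * fderiv ℝ b z Complex.I) / 2‖ :=
  (tendsto_barQOscillation (hasFDerivAt_iff_isLittleO_nhds_zero.mp hb.hasFDerivAt)).limsup_eq
end

section
/- Let b : ℝ² → ℝ² be a smooth (everywhere differentiable) vector field belonging to the class Q̄, i.e. there is C₀ with |⟨b(z+h)−b(z), h̄⟩/|h|² − ⟨b(z+k)−b(z), k̄⟩/|k|²| ≤ C₀ for all z and all h,k with |h|=|k|≠0. Then the complex derivative ∂b is bounded, with ‖∂b‖_{L^∞} ≤ C₀/2. -/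
/-!
Letting `t → 0` along `t • h` in the `Q̄` condition gives
`|Re (L h * h) / ‖h‖² - Re (L k * k) / ‖k‖²| ≤ C₀` for `L = Db(z)` and `‖h‖ = ‖k‖ ≠ 0`.
Since `L v = ∂b * v + ∂̄b * conj v`, the choice `k = I * h` cancels the `∂̄b` terms and leaves
`Re (2 ∂b * h²) ≤ C₀ ‖h‖²`; taking `h² = conj ∂b` gives `2 ‖∂b‖ ≤ C₀`.
-/

open Filter Topology Complex

theorem Complex.re_mul_smul_div_norm_smul_sq (Δ h : ℂ) {t : ℝ} (ht : t ≠ 0) :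
    (Δ * (t • h)).re / ‖t • h‖ ^ 2 = ((t⁻¹ • Δ) * h).re / ‖h‖ ^ 2 := by
  simp only [Complex.real_smul, norm_mul, Complex.norm_real, Real.norm_eq_abs, mul_pow, sq_abs]
  rw [show Δ * (t * h) = t * (Δ * h) by ring, mul_assoc, Complex.re_ofReal_mul,
    Complex.re_ofReal_mul]
  field_simp

theorem tendsto_re_slope_mul_div_norm_sq {f : ℂ → ℂ} {z : ℂ} (hf : DifferentiableAt ℝ f z)
    (h : ℂ) :
    Tendsto (fun t : ℝ => ((f (z + t • h) - f z) * (t • h)).re / ‖t • h‖ ^ 2)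
      (𝓝[≠] 0) (𝓝 ((fderiv ℝ f z h * h).re / ‖h‖ ^ 2)) := by
  have hline : HasDerivAt (fun t : ℝ => f (z + t • h)) (fderiv ℝ f z h) 0 := by
    have hz : HasFDerivAt f (fderiv ℝ f z) (z + (0 : ℝ) • h) := by simpa using hf.hasFDerivAt
    exact hz.comp_hasDerivAt 0
      (((hasDerivAt_id 0).smul_const h).const_add z |>.congr_deriv (by simp))
  have hcont : Continuous fun w : ℂ => (w * h).re / ‖h‖ ^ 2 := by fun_prop
  refine ((hcont.tendsto _).comp (hasDerivAt_iff_tendsto_slope.mp hline)).congr' ?_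
  filter_upwards [self_mem_nhdsWithin] with t ht
  rw [Function.comp_apply, re_mul_smul_div_norm_smul_sq _ _ ht, slope_def_module]
  simp

theorem ContinuousLinearMap.apply_mul_self_sub_apply_I_mul (L : ℂ →L[ℝ] ℂ) (h : ℂ) :
    L h * h - L (I * h) * (I * h) = (L 1 - I * L I) * h ^ 2 := by
  have hL : ∀ v : ℂ, L v = v.re * L 1 + v.im * L I := by
    intro v
    calc L v = L (v.re • 1 + v.im • I) := by simp
      _ = v.re * L 1 + v.im * L I := by
        rw [map_add, L.map_smul, L.map_smul, Complex.real_smul, Complex.real_smul]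
  rw [hL h, hL (I * h)]
  apply Complex.ext <;> simp [Complex.mul_re, Complex.mul_im, pow_two] <;> ring

theorem Complex.norm_le_of_forall_re_mul_sq_div_le {E : ℂ} {C : ℝ}
    (hE : ∀ h : ℂ, h ≠ 0 → (E * h ^ 2).re / ‖h‖ ^ 2 ≤ C) : ‖E‖ ≤ C := by
  rcases eq_or_ne E 0 with rfl | hE0
  · simpa using hE 1 one_ne_zero
  obtain ⟨h, hh⟩ := IsAlgClosed.exists_pow_nat_eq (starRingEnd ℂ E) two_pos
  have hnorm : ‖h‖ ^ 2 = ‖E‖ := by rw [← norm_pow, hh, Complex.norm_conj]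
  have h0 : h ≠ 0 := by rintro rfl; exact hE0 (by simpa using hh.symm)
  have := hE h h0
  rwa [hh, Complex.mul_conj, Complex.normSq_eq_norm_sq, hnorm, Complex.ofReal_re, sq,
    mul_div_cancel_right₀ _ (norm_ne_zero_iff.mpr hE0)] at this

theorem abs_sub_re_fderiv_mul_div_le {b : ℂ → ℂ} {z : ℂ} (hb : DifferentiableAt ℝ b z) {C : ℝ}
    (hQ : ∀ h k : ℂ, ‖h‖ = ‖k‖ → h ≠ 0 →
      |((b (z + h) - b z) * h).re / ‖h‖ ^ 2 - ((b (z + k) - b z) * k).re / ‖k‖ ^ 2| ≤ C)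
    {h k : ℂ} (hhk : ‖h‖ = ‖k‖) (hh : h ≠ 0) :
    |(fderiv ℝ b z h * h).re / ‖h‖ ^ 2 - (fderiv ℝ b z k * k).re / ‖k‖ ^ 2| ≤ C := by
  refine le_of_tendsto ((tendsto_re_slope_mul_div_norm_sq hb h).sub
    (tendsto_re_slope_mul_div_norm_sq hb k)).abs ?_
  filter_upwards [self_mem_nhdsWithin] with t ht
  exact hQ (t • h) (t • k) (by simp only [norm_smul, hhk]) (smul_ne_zero ht hh)

/-- If `b : ℂ → ℂ` is everywhere differentiable and belongs to the class `Q̄`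
with constant `C₀`, then `‖∂b‖_∞ ≤ C₀/2`. Here `⟨w, h̄⟩ = Re(w·h)` and
`∂b(z) = (L 1 − i·L i)/2` with `L = Db(z)`. -/
theorem smooth_barQ_bounded_partial (b : ℂ → ℂ) (hb : ∀ z, DifferentiableAt ℝ b z)
    (C₀ : ℝ)
    (hQ : ∀ (z h k : ℂ), ‖h‖ = ‖k‖ → h ≠ 0 →
      |((b (z + h) - b z) * h).re / ‖h‖ ^ 2
        - ((b (z + k) - b z) * k).re / ‖k‖ ^ 2| ≤ C₀) :
    ∀ z : ℂ, ‖(fderiv ℝ b z 1 - Complex.I * fderiv ℝ b z Complex.I) / 2‖ ≤ C₀ / 2 := by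
  intro z
  set L := fderiv ℝ b z
  suffices ‖L 1 - I * L I‖ ≤ C₀ by
    rw [norm_div, Complex.norm_two]
    linarith
  refine norm_le_of_forall_re_mul_sq_div_le fun h hh => ?_
  have hIh : ‖I * h‖ = ‖h‖ := by simp
  have hdiff := abs_sub_re_fderiv_mul_div_le (hb z) (hQ z) hIh.symm hh
  rw [hIh, div_sub_div_same, ← Complex.sub_re, L.apply_mul_self_sub_apply_I_mul] at hdiff
  exact (le_abs_self _).trans hdiff
end

section
/- Let b : ℝ^n → ℝ^n be differentiable at a point x. Then limsup as |h|,|k| → 0 of |⟨b(x+h)−b(x), k⟩ − ⟨b(x+k)−b(x), h⟩| / (|h||k|) equals |Db(x) − Dᵗb(x)|, the operator norm of the antisymmetric part of the differential (times 2, i.e. of the matrix Db(x) − Dᵗb(x)). -/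
open Filter
open scoped RealInnerProductSpace

/-!
Write `b (x + h) - b x = A h + e h` with `A = Db(x)` and `‖e h‖ ≤ ε ‖h‖` for small `h`. Then
`⟪b (x + h) - b x, k⟫ - ⟪b (x + k) - b x, h⟫` is `⟪(A - Aᵗ) h, k⟫` up to an error
`2 ε ‖h‖ ‖k‖`. On every ball, the supremum of `|⟪M h, k⟫| / (‖h‖ ‖k‖)` is `‖M‖` (take `h` along a
near-maximiser of `‖M h‖ / ‖h‖` and `k` along `M h`), so for all small radii the supremum in the
statement lies within `2 ε` of `‖A - Aᵗ‖`: it converges, and its limsup is the limit.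
-/

section RatioSup

variable {E : Type*} [NormedAddCommGroup E]

noncomputable def ratioSup (φ : E → E → ℝ) (r : ℝ) : ℝ :=
  sSup {v : ℝ | ∃ h k : E, h ≠ 0 ∧ k ≠ 0 ∧ ‖h‖ ≤ r ∧ ‖k‖ ≤ r ∧ v = |φ h k| / (‖h‖ * ‖k‖)}

theorem ratioSup_nonneg (φ : E → E → ℝ) (r : ℝ) : 0 ≤ ratioSup φ r :=
  Real.sSup_nonneg (by rintro _ ⟨h, k, -, -, -, -, rfl⟩; positivity)

variable {φ : E → E → ℝ} {r C : ℝ}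

theorem div_le_ratioSup_of_bound
    (hφ : ∀ h k : E, ‖h‖ ≤ r → ‖k‖ ≤ r → |φ h k| ≤ C * (‖h‖ * ‖k‖))
    {h k : E} (hh : h ≠ 0) (hk : k ≠ 0) (hhr : ‖h‖ ≤ r) (hkr : ‖k‖ ≤ r) :
    |φ h k| / (‖h‖ * ‖k‖) ≤ ratioSup φ r := by
  refine le_csSup ⟨C, ?_⟩ ⟨h, k, hh, hk, hhr, hkr, rfl⟩
  rintro _ ⟨h, k, hh, hk, hhr, hkr, rfl⟩
  have : 0 < ‖h‖ * ‖k‖ := by positivity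
  exact (div_le_iff₀ this).2 (hφ h k hhr hkr)

theorem ratioSup_le (hC : 0 ≤ C)
    (hφ : ∀ h k : E, ‖h‖ ≤ r → ‖k‖ ≤ r → |φ h k| ≤ C * (‖h‖ * ‖k‖)) :
    ratioSup φ r ≤ C := by
  refine Real.sSup_le ?_ hC
  rintro _ ⟨h, k, hh, hk, hhr, hkr, rfl⟩
  have : 0 < ‖h‖ * ‖k‖ := by positivity
  exact (div_le_iff₀ this).2 (hφ h k hhr hkr)

end RatioSup

theorem ContinuousLinearMap.exists_norm_eq_mul_lt_inner {E F : Type*} [NormedAddCommGroup E]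
    [NormedSpace ℝ E] [NormedAddCommGroup F] [InnerProductSpace ℝ F] (M : E →L[ℝ] F)
    {r c : ℝ} (hr : 0 < r) (hc : 0 ≤ c) (hcM : c < ‖M‖) :
    ∃ (h : E) (k : F), ‖h‖ = r ∧ ‖k‖ = r ∧ c * (r * r) < ⟪M h, k⟫ := by
  obtain ⟨u, hu⟩ := M.exists_mul_lt_of_lt_opNorm hc hcM
  have hu0 : u ≠ 0 := by rintro rfl; simp at hu
  set h := (r * ‖u‖⁻¹) • u
  have hh : ‖h‖ = r := norm_smul_inv_norm' hr.le hu0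
  have hMh : c * r < ‖M h‖ := by
    have hu' : 0 < ‖u‖ := norm_pos_iff.2 hu0
    rw [map_smul, norm_smul, Real.norm_of_nonneg (by positivity)]
    calc c * r = r * ‖u‖⁻¹ * (c * ‖u‖) := by field_simp
      _ < r * ‖u‖⁻¹ * ‖M u‖ := by gcongr
  have hMh0 : M h ≠ 0 := norm_pos_iff.1 ((by positivity : 0 ≤ c * r).trans_lt hMh)
  refine ⟨h, (r * ‖M h‖⁻¹) • M h, hh, norm_smul_inv_norm' hr.le hMh0, ?_⟩
  have hMh' : 0 < ‖M h‖ := norm_pos_iff.2 hMh0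
  rw [real_inner_smul_right, real_inner_self_eq_norm_sq]
  calc c * (r * r) = r * (c * r) := by ring
    _ < r * ‖M h‖ := by gcongr
    _ = r * ‖M h‖⁻¹ * ‖M h‖ ^ 2 := by field_simp

theorem abs_ratioSup_sub_opNorm_le {E : Type*} [NormedAddCommGroup E] [InnerProductSpace ℝ E]
    {φ : E → E → ℝ} {M : E →L[ℝ] E} {r ε : ℝ} (hr : 0 < r) (hε : 0 ≤ ε)
    (hφ : ∀ h k : E, ‖h‖ ≤ r → ‖k‖ ≤ r → |φ h k - ⟪M h, k⟫| ≤ ε * (‖h‖ * ‖k‖)) :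
    |ratioSup φ r - ‖M‖| ≤ ε := by
  have hbound : ∀ h k : E, ‖h‖ ≤ r → ‖k‖ ≤ r → |φ h k| ≤ (‖M‖ + ε) * (‖h‖ * ‖k‖) := by
    intro h k hh hk
    have hM : |⟪M h, k⟫| ≤ ‖M‖ * (‖h‖ * ‖k‖) := by
      rw [← mul_assoc]
      exact (abs_real_inner_le_norm _ _).trans (by gcongr; exact M.le_opNorm h)
    linarith [abs_sub_abs_le_abs_sub (φ h k) ⟪M h, k⟫, hφ h k hh hk]
  refine abs_sub_le_iff.2 ⟨by linarith [ratioSup_le (by positivity) hbound], ?_⟩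
  suffices ‖M‖ ≤ ratioSup φ r + ε by linarith
  refine le_of_forall_lt fun c hc => ?_
  rcases lt_or_ge c 0 with hc0 | hc0
  · linarith [ratioSup_nonneg φ r]
  obtain ⟨h, k, hh, hk, hMhk⟩ := M.exists_norm_eq_mul_lt_inner hr hc0 hc
  have hh0 : h ≠ 0 := norm_pos_iff.1 (hh ▸ hr)
  have hk0 : k ≠ 0 := norm_pos_iff.1 (hk ▸ hr)
  have hle := div_le_ratioSup_of_bound hbound hh0 hk0 hh.le hk.le
  have hφhk := hφ h k hh.le hk.le
  rw [hh, hk] at hle hφhk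
  have hlow : (c - ε) * (r * r) < |φ h k| := by
    linarith [neg_abs_le (φ h k - ⟪M h, k⟫), le_abs_self (φ h k)]
  have := (lt_div_iff₀ (by positivity)).2 hlow
  linarith

theorem inner_antisymm_sub_inner_sub_adjoint {E : Type*} [NormedAddCommGroup E]
    [InnerProductSpace ℝ E] [CompleteSpace E] (f : E → E) (A : E →L[ℝ] E) (h k : E) :
    ⟪f h, k⟫ - ⟪f k, h⟫ - ⟪(A - ContinuousLinearMap.adjoint A) h, k⟫
      = ⟪f h - A h, k⟫ - ⟪f k - A k, h⟫ := by
  rw [sub_apply, inner_sub_left, ContinuousLinearMap.adjoint_inner_left,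
    inner_sub_left, inner_sub_left, real_inner_comm h (A k)]
  ring

theorem abs_inner_antisymm_sub_inner_sub_adjoint_le {E : Type*} [NormedAddCommGroup E]
    [InnerProductSpace ℝ E] [CompleteSpace E] {f : E → E} {A : E →L[ℝ] E} {ε : ℝ} {h k : E}
    (hh : ‖f h - A h‖ ≤ ε * ‖h‖) (hk : ‖f k - A k‖ ≤ ε * ‖k‖) :
    |⟪f h, k⟫ - ⟪f k, h⟫ - ⟪(A - ContinuousLinearMap.adjoint A) h, k⟫| ≤ 2 * ε * (‖h‖ * ‖k‖) := by
  rw [inner_antisymm_sub_inner_sub_adjoint]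
  calc |⟪f h - A h, k⟫ - ⟪f k - A k, h⟫| ≤ ‖f h - A h‖ * ‖k‖ + ‖f k - A k‖ * ‖h‖ :=
        (abs_sub _ _).trans (add_le_add (abs_real_inner_le_norm _ _) (abs_real_inner_le_norm _ _))
    _ ≤ ε * ‖h‖ * ‖k‖ + ε * ‖k‖ * ‖h‖ := by gcongr
    _ = 2 * ε * (‖h‖ * ‖k‖) := by ring

theorem HasFDerivAt.exists_pos_forall_norm_sub_le {𝕜 E F : Type*} [NontriviallyNormedField 𝕜]
    [NormedAddCommGroup E] [NormedSpace 𝕜 E] [NormedAddCommGroup F] [NormedSpace 𝕜 F]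
    {f : E → F} {f' : E →L[𝕜] F} {x : E} (hf : HasFDerivAt f f' x) {ε : ℝ} (hε : 0 < ε) :
    ∃ δ > 0, ∀ h : E, ‖h‖ ≤ δ → ‖f (x + h) - f x - f' h‖ ≤ ε * ‖h‖ := by
  obtain ⟨δ, hδ, hball⟩ := Metric.nhds_basis_closedBall.eventually_iff.1
    ((hasFDerivAt_iff_isLittleO_nhds_zero.1 hf).def hε)
  exact ⟨δ, hδ, fun h hh => hball (mem_closedBall_zero_iff.2 hh)⟩

/-- If `b : ℝⁿ → ℝⁿ` is differentiable at `x`, then the limsup as `|h|,|k| → 0` of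
`|⟨b(x+h)−b(x), k⟩ − ⟨b(x+k)−b(x), h⟩|/(|h||k|)` equals the operator norm of
`Db(x) − Dᵗb(x)` (the adjoint being the transpose). -/
theorem antisymmetric_part_pointwise_limsup (n : ℕ)
    (b : EuclideanSpace ℝ (Fin n) → EuclideanSpace ℝ (Fin n))
    (x : EuclideanSpace ℝ (Fin n)) (hb : DifferentiableAt ℝ b x) :
    Filter.limsup
      (fun r : ℝ => sSup {v : ℝ | ∃ h k : EuclideanSpace ℝ (Fin n),
        h ≠ 0 ∧ k ≠ 0 ∧ ‖h‖ ≤ r ∧ ‖k‖ ≤ r ∧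
        v = |⟪b (x + h) - b x, k⟫ - ⟪b (x + k) - b x, h⟫| / (‖h‖ * ‖k‖)})
      (nhdsWithin 0 (Set.Ioi 0))
    = ‖fderiv ℝ b x - ContinuousLinearMap.adjoint (fderiv ℝ b x)‖ := by
  refine Tendsto.limsup_eq (Metric.tendsto_nhds.2 fun ε hε => ?_)
  obtain ⟨δ, hδ, hrem⟩ :=
    hb.hasFDerivAt.exists_pos_forall_norm_sub_le (by positivity : (0 : ℝ) < ε / 4)
  filter_upwards [Ioo_mem_nhdsGT hδ] with r ⟨hr, hrδ⟩
  have hclose : |ratioSup (fun h k => ⟪b (x + h) - b x, k⟫ - ⟪b (x + k) - b x, h⟫) r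
      - ‖fderiv ℝ b x - ContinuousLinearMap.adjoint (fderiv ℝ b x)‖| ≤ 2 * (ε / 4) :=
    abs_ratioSup_sub_opNorm_le hr (by positivity) fun h k hh hk =>
      abs_inner_antisymm_sub_inner_sub_adjoint_le (f := fun h => b (x + h) - b x)
        (hrem h (hh.trans hrδ.le)) (hrem k (hk.trans hrδ.le))
  rw [Real.dist_eq]
  exact hclose.trans_lt (by linarith)
end

section
/- Let b : ℝ^n → ℝ^n be continuous and belong to the class R₀, meaning |⟨b(x+h)−b(x), k⟩ − ⟨b(x+k)−b(x), h⟩| ≤ C₀ |h||k| for all x ∈ ℝ^n and all h, k with |h| = |k| ≠ 0. Then b belongs to the Zygmund class, with ‖b‖_Z ≤ 4 C₀, i.e. |b(z+v) + b(z−v) − 2b(z)| ≤ 4 C₀ |v| for all z, v ∈ ℝ^n. -/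
/-!
Write `Δ = b(z+v) + b(z-v) - 2 b(z)`. Testing the `R₀` condition at `z` with `(h, k) = (v, -v)`
bounds the component of `Δ` along `v` by `C₀ ‖v‖`. For `a ⊥ v` with `‖a‖ = ‖v‖`, the pairs
`(a - v, -a - v)` based at `z + v` and `(a + v, -a + v)` based at `z - v` have equal lengths by
Pythagoras, and their sum compares the second differences in the directions `v` and `a`; together
with the first bound in direction `a` this bounds the component of `Δ` orthogonal to `v` by
`3 C₀ ‖v‖`.
-/

open scoped RealInnerProductSpace

section

variable {E : Type*} [NormedAddCommGroup E] [InnerProductSpace ℝ E]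

def IsR0 (b : E → E) (C₀ : ℝ) : Prop :=
  ∀ x h k : E, ‖h‖ = ‖k‖ → h ≠ 0 →
    |⟪b (x + h) - b x, k⟫ - ⟪b (x + k) - b x, h⟫| ≤ C₀ * ‖h‖ * ‖k‖

theorem norm_le_of_abs_inner_le_of_orthogonal {D v : E} (hv : v ≠ 0) {α β : ℝ} (hβ : 0 ≤ β)
    (hpar : |⟪D, v⟫| ≤ α * ‖v‖ ^ 2)
    (horth : ∀ a : E, ⟪a, v⟫ = 0 → ‖a‖ = ‖v‖ → |⟪D, a⟫| ≤ β * ‖v‖ ^ 2) :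
    ‖D‖ ≤ (α + β) * ‖v‖ := by
  have hv₀ : 0 < ‖v‖ := norm_pos_iff.mpr hv
  set P : E := (⟪D, v⟫ / ‖v‖ ^ 2) • v
  set Q : E := D - P
  have hQv : ⟪Q, v⟫ = 0 := by
    simp only [Q, P, inner_sub_left, real_inner_smul_left, real_inner_self_eq_norm_sq]
    field_simp
    ring
  have hP : ‖P‖ ≤ α * ‖v‖ := by
    have hPeq : ‖P‖ * ‖v‖ = |⟪D, v⟫| := by
      simp only [P, norm_smul, Real.norm_eq_abs, abs_div, abs_pow, abs_norm]
      field_simp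
    nlinarith
  have hQ : ‖Q‖ ≤ β * ‖v‖ := by
    rcases eq_or_ne Q 0 with hQ0 | hQ0
    · rw [hQ0, norm_zero]
      positivity
    have hQ₀ : 0 < ‖Q‖ := norm_pos_iff.mpr hQ0
    set a : E := (‖v‖ / ‖Q‖) • Q
    have hav : ⟪a, v⟫ = 0 := by simp only [a, real_inner_smul_left, hQv, mul_zero]
    have ha : ‖a‖ = ‖v‖ := by
      simp only [a, norm_smul, Real.norm_eq_abs, abs_div, abs_norm]
      field_simp
    have hDa : ⟪D, a⟫ = ‖v‖ * ‖Q‖ := by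
      have hPQ : ⟪P, Q⟫ = 0 := by
        rw [real_inner_smul_left, real_inner_comm Q v, hQv, mul_zero]
      have hD : D = P + Q := (add_sub_cancel P D).symm
      rw [real_inner_smul_right, hD, inner_add_left, hPQ, zero_add,
        real_inner_self_eq_norm_sq]
      field_simp
    have := horth a hav ha
    rw [hDa, abs_of_nonneg (by positivity)] at this
    nlinarith
  calc ‖D‖ = ‖P + Q‖ := by rw [add_sub_cancel]
    _ ≤ ‖P‖ + ‖Q‖ := norm_add_le P Q
    _ ≤ (α + β) * ‖v‖ := by linarith

namespace IsR0

variable {b : E → E} {C₀ : ℝ}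

theorem nonneg (hR : IsR0 b C₀) {v : E} (hv : v ≠ 0) : 0 ≤ C₀ := by
  have h := hR 0 v v rfl hv
  rw [sub_self, abs_zero, mul_assoc] at h
  exact nonneg_of_mul_nonneg_left h (by positivity)

theorem abs_inner_secondDiff_self_le (hR : IsR0 b C₀) (z v : E) :
    |⟪b (z + v) + b (z - v) - (2 : ℝ) • b z, v⟫| ≤ C₀ * ‖v‖ ^ 2 := by
  rcases eq_or_ne v 0 with rfl | hv
  · simp
  have h := hR z v (-v) (norm_neg v).symm hv
  have hsum : ⟪b (z + v) - b z, -v⟫ - ⟪b (z + -v) - b z, v⟫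
      = -⟪b (z + v) + b (z - v) - (2 : ℝ) • b z, v⟫ := by
    simp only [← sub_eq_add_neg, inner_sub_left, inner_add_left, inner_neg_right,
      real_inner_smul_left]
    ring
  rwa [hsum, abs_neg, norm_neg, mul_assoc, ← sq] at h

theorem abs_inner_sub_secondDiff_orthogonal_le (hR : IsR0 b C₀) (z : E) {v a : E}
    (hav : ⟪a, v⟫ = 0) (ha : ‖a‖ = ‖v‖) :
    |⟪(b (z + v) + b (z - v)) - (b (z + a) + b (z - a)), a⟫| ≤ 2 * C₀ * ‖v‖ ^ 2 := by
  rcases eq_or_ne v 0 with rfl | hv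
  · rw [norm_zero, norm_eq_zero] at ha
    simp [ha]
  have hva : ⟪v, a⟫ = 0 := by rwa [real_inner_comm]
  have hsq : ‖a - v‖ ^ 2 = 2 * ‖v‖ ^ 2 := by
    rw [sq, norm_sub_sq_eq_norm_sq_add_norm_sq_real hav, ha]
    ring
  have hplus : ‖a - v‖ = ‖a + v‖ := norm_sub_eq_norm_add hva
  have h₁n : ‖a - v‖ = ‖-a - v‖ := by rw [← neg_add', norm_neg, hplus]
  have h₂n : ‖a + v‖ = ‖-a + v‖ := by rw [neg_add_eq_sub, norm_sub_rev, hplus]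
  have hne : a - v ≠ 0 := fun h0 => hv <| by
    rw [h0, norm_zero] at hsq
    exact norm_eq_zero.mp (by nlinarith)
  have h₁ := hR (z + v) (a - v) (-a - v) h₁n hne
  have h₂ := hR (z - v) (a + v) (-a + v) h₂n
    (by rwa [← norm_ne_zero_iff, ← hplus, norm_ne_zero_iff])
  have hz : z + v + (a - v) = z + a ∧ z + v + (-a - v) = z - a ∧
      z - v + (a + v) = z + a ∧ z - v + (-a + v) = z - a := by
    refine ⟨?_, ?_, ?_, ?_⟩ <;> abel
  rw [hz.1, hz.2.1, ← h₁n, mul_assoc, ← sq, hsq] at h₁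
  rw [hz.2.2.1, hz.2.2.2, ← h₂n, mul_assoc, ← sq, ← hplus, hsq] at h₂
  rw [abs_le] at h₁ h₂ ⊢
  simp only [inner_sub_left, inner_add_left, inner_sub_right, inner_add_right,
    inner_neg_right] at h₁ h₂ ⊢
  constructor <;> linarith

theorem abs_inner_secondDiff_orthogonal_le (hR : IsR0 b C₀) (z : E) {v a : E}
    (hav : ⟪a, v⟫ = 0) (ha : ‖a‖ = ‖v‖) :
    |⟪b (z + v) + b (z - v) - (2 : ℝ) • b z, a⟫| ≤ 3 * C₀ * ‖v‖ ^ 2 := by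
  have hsplit : b (z + v) + b (z - v) - (2 : ℝ) • b z
      = ((b (z + v) + b (z - v)) - (b (z + a) + b (z - a)))
        + (b (z + a) + b (z - a) - (2 : ℝ) • b z) := by abel
  have hdiag := hR.abs_inner_secondDiff_self_le z a
  rw [ha] at hdiag
  calc _ ≤ |⟪(b (z + v) + b (z - v)) - (b (z + a) + b (z - a)), a⟫|
        + |⟪b (z + a) + b (z - a) - (2 : ℝ) • b z, a⟫| := by
        rw [hsplit, inner_add_left]
        exact abs_add_le _ _
    _ ≤ 3 * C₀ * ‖v‖ ^ 2 := by
        linarith [hR.abs_inner_sub_secondDiff_orthogonal_le z hav ha]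

end IsR0

end

theorem R0_subset_Zygmund_general (n : ℕ)
    (b : EuclideanSpace ℝ (Fin n) → EuclideanSpace ℝ (Fin n))
    (C₀ : ℝ)
    (hR : ∀ (x h k : EuclideanSpace ℝ (Fin n)), ‖h‖ = ‖k‖ → h ≠ 0 →
      |⟪b (x + h) - b x, k⟫ - ⟪b (x + k) - b x, h⟫| ≤ C₀ * ‖h‖ * ‖k‖) :
    ∀ z v : EuclideanSpace ℝ (Fin n),
      ‖b (z + v) + b (z - v) - (2 : ℝ) • b z‖ ≤ 4 * C₀ * ‖v‖ := by
  have hR : IsR0 b C₀ := hR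
  intro z v
  rcases eq_or_ne v 0 with rfl | hv
  · simp [two_smul]
  calc _ ≤ (C₀ + 3 * C₀) * ‖v‖ :=
        norm_le_of_abs_inner_le_of_orthogonal hv (by linarith [hR.nonneg hv])
          (hR.abs_inner_secondDiff_self_le z v)
          (fun a hav ha => hR.abs_inner_secondDiff_orthogonal_le z hav ha)
    _ = 4 * C₀ * ‖v‖ := by ring

/-- If `b : ℝⁿ → ℝⁿ` is continuous and belongs to the class `R₀` with constant `C₀`,
then `b` is in the Zygmund class with `‖b‖_Z ≤ 4 C₀`. -/
theorem R0_subset_Zygmund (n : ℕ)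
    (b : EuclideanSpace ℝ (Fin n) → EuclideanSpace ℝ (Fin n))
    (hb : Continuous b) (C₀ : ℝ)
    (hR : ∀ (x h k : EuclideanSpace ℝ (Fin n)), ‖h‖ = ‖k‖ → h ≠ 0 →
      |⟪b (x + h) - b x, k⟫ - ⟪b (x + k) - b x, h⟫| ≤ C₀ * ‖h‖ * ‖k‖) :
    ∀ z v : EuclideanSpace ℝ (Fin n),
      ‖b (z + v) + b (z - v) - (2 : ℝ) • b z‖ ≤ 4 * C₀ * ‖v‖ :=
  R0_subset_Zygmund_general n b C₀ hR
end

section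
/- Let b : ℝ^n → ℝ^n be in the class R₀. Then for all x ∈ ℝ^n and all nonzero h, k ∈ ℝ^n (not necessarily of equal length), |⟨b(x+h)−b(x), k⟩ − ⟨b(x+k)−b(x), h⟩| / (|h||k|) ≤ C(n) ‖b‖_{R₀} (1 + |log(|h|/|k|)|) for a constant C(n) depending only on n. -/
/-!
Along the segment `t ↦ x + t u` (with `u, v` unit vectors) the scalar function
`g t = ⟪b (x + t u) - b x, v⟫` satisfies a Zygmund condition with constant `2 ‖b‖_{R₀}`, since
a symmetric second difference of `b` is a difference of two `R₀` quotients of equal-length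
increments. For a Zygmund function vanishing at `0` the slopes `g s / s` drift by at most a
constant per doubling of `s` (a maximum principle handles the non-dyadic last step), so
`g s / s` and `g r / r` differ by `O(1 + log (s / r))`. Writing `h = s u`, `k = r v`, the
quotient at `(h, k)` splits into this slope difference and the `R₀` quotient at the
equal-length pair `(r u, k)`.
-/

open scoped RealInnerProductSpace

open Set

lemma logb_two_le_two_mul_log {t : ℝ} (ht : 1 ≤ t) : Real.logb 2 t ≤ 2 * Real.log t := by
  rw [Real.logb, div_le_iff₀ (Real.log_pos one_lt_two)]
  nlinarith [Real.log_two_gt_d9, Real.log_nonneg ht]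

def ZygmundWith (Z : ℝ) (g : ℝ → ℝ) : Prop :=
  ∀ p τ, |g (p + τ) + g (p - τ) - 2 * g p| ≤ Z * |τ|

namespace ZygmundWith

variable {Z : ℝ} {g : ℝ → ℝ}

lemma nonneg (hg : ZygmundWith Z g) : 0 ≤ Z := by
  simpa using (abs_nonneg _).trans (hg 0 1)

/-- Maximum principle: at a maximum point `μ₀` of `|d|`, the second difference reaching the
nearer endpoint gives `2 |d μ₀| ≤ |d μ₀| + K / 2`. -/
lemma abs_le_half_of_eq_zero_of_eq_zero {K : ℝ} {d : ℝ → ℝ} (hK : ZygmundWith K d)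
    (hd : Continuous d) (hd₀ : d 0 = 0) (hd₁ : d 1 = 0) {μ : ℝ} (hμ : μ ∈ Icc (0 : ℝ) 1) :
    |d μ| ≤ K / 2 := by
  obtain ⟨μ₀, hμ₀, hmax⟩ := isCompact_Icc.exists_isMaxOn (nonempty_Icc.2 zero_le_one)
    (hd.abs.continuousOn)
  have hmax' : ∀ ν ∈ Icc (0 : ℝ) 1, |d ν| ≤ |d μ₀| := fun ν hν => hmax hν
  refine (hmax' μ hμ).trans ?_
  have hK₀ := hK.nonneg
  obtain ⟨h0, h1⟩ := hμ₀
  suffices ∃ ν ∈ Icc (0 : ℝ) 1, |d ν - 2 * d μ₀| ≤ K / 2 by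
    obtain ⟨ν, hν, hν₀⟩ := this
    have := calc 2 * |d μ₀| = |d ν - (d ν - 2 * d μ₀)| := by rw [sub_sub_cancel, abs_mul, abs_two]
      _ ≤ |d ν| + |d ν - 2 * d μ₀| := abs_sub _ _
    linarith [hmax' ν hν]
  rcases le_total μ₀ (1 / 2) with hle | hle
  · refine ⟨μ₀ + μ₀, ⟨by linarith, by linarith⟩, ?_⟩
    have := hK μ₀ μ₀
    rw [sub_self, hd₀, add_zero, abs_of_nonneg h0] at this
    nlinarith
  · refine ⟨μ₀ - (1 - μ₀), ⟨by linarith, by linarith⟩, ?_⟩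
    have := hK μ₀ (1 - μ₀)
    rw [add_sub_cancel, hd₁, zero_add, abs_of_nonneg (by linarith : (0 : ℝ) ≤ 1 - μ₀)] at this
    nlinarith

lemma abs_sub_mul_le (hg : ZygmundWith Z g) (hgc : Continuous g) (hg₀ : g 0 = 0) (s : ℝ)
    {μ : ℝ} (hμ : μ ∈ Icc (0 : ℝ) 1) : |g (μ * s) - μ * g s| ≤ Z * |s| / 2 := by
  have hd : ZygmundWith (Z * |s|) fun μ => g (μ * s) - μ * g s := by
    intro p τ
    convert hg (p * s) (τ * s) using 1
    · simp only [add_mul, sub_mul]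
      ring_nf
    · rw [abs_mul]
      ring
  exact hd.abs_le_half_of_eq_zero_of_eq_zero (by fun_prop) (by simp [hg₀]) (by simp) hμ

lemma abs_div_sub_div_le (hg : ZygmundWith Z g) (hgc : Continuous g) (hg₀ : g 0 = 0)
    {r s : ℝ} (hr : 0 < r) (hrs : r ≤ s) (hs : s ≤ 2 * r) : |g s / s - g r / r| ≤ Z := by
  have hs₀ : 0 < s := hr.trans_le hrs
  have := hg.abs_sub_mul_le hgc hg₀ s ⟨by positivity, (div_le_one hs₀).2 hrs⟩ (μ := r / s)
  rw [div_mul_cancel₀ _ hs₀.ne', abs_of_pos hs₀] at this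
  have hid : g s / s - g r / r = -((g r - r / s * g s) / r) := by field_simp; ring
  rw [hid, abs_neg, abs_div, abs_of_pos hr, div_le_iff₀ hr]
  nlinarith [hg.nonneg]

lemma abs_div_sub_div_le_of_le_two_pow (hg : ZygmundWith Z g) (hgc : Continuous g)
    (hg₀ : g 0 = 0) (N : ℕ) {r s : ℝ} (hr : 0 < r) (hrs : r ≤ s) (hsN : s ≤ 2 ^ N * r) :
    |g s / s - g r / r| ≤ N * Z := by
  induction N generalizing s with
  | zero =>
    obtain rfl : s = r := le_antisymm (by simpa using hsN) hrs
    simp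
  | succ N ih =>
    rcases le_total s (2 * r) with hs | hs
    · have := hg.abs_div_sub_div_le hgc hg₀ hr hrs hs
      have : 0 ≤ N * Z := mul_nonneg N.cast_nonneg hg.nonneg
      push_cast
      linarith
    · have hhalf := hg.abs_div_sub_div_le hgc hg₀ (r := s / 2) (s := s) (by linarith)
        (by linarith) (by linarith)
      have hrest := ih (s := s / 2) (by linarith) (by rw [pow_succ] at hsN; linarith)
      calc |g s / s - g r / r|
          ≤ |g s / s - g (s / 2) / (s / 2)| + |g (s / 2) / (s / 2) - g r / r| := abs_sub_le _ _ _
        _ ≤ (N + 1 : ℕ) * Z := by push_cast; linarith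

lemma abs_div_sub_div_le_logb (hg : ZygmundWith Z g) (hgc : Continuous g) (hg₀ : g 0 = 0)
    {r s : ℝ} (hr : 0 < r) (hrs : r ≤ s) :
    |g s / s - g r / r| ≤ Z * (1 + Real.logb 2 (s / r)) := by
  have hsr : 0 < s / r := div_pos (hr.trans_le hrs) hr
  have hlogb : 0 ≤ Real.logb 2 (s / r) := Real.logb_nonneg one_lt_two ((one_le_div hr).2 hrs)
  set N := ⌈Real.logb 2 (s / r)⌉₊
  have hsN : s ≤ 2 ^ N * r := by
    rw [← div_le_iff₀ hr, ← Real.rpow_natCast]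
    calc s / r = 2 ^ Real.logb 2 (s / r) := (Real.rpow_logb two_pos (by norm_num) hsr).symm
      _ ≤ 2 ^ (N : ℝ) := Real.rpow_le_rpow_of_exponent_le one_le_two (Nat.le_ceil _)
  have hN : (N : ℝ) ≤ 1 + Real.logb 2 (s / r) := by linarith [Nat.ceil_lt_add_one hlogb]
  calc |g s / s - g r / r| ≤ N * Z := hg.abs_div_sub_div_le_of_le_two_pow hgc hg₀ N hr hrs hsN
    _ ≤ Z * (1 + Real.logb 2 (s / r)) := by nlinarith [hg.nonneg]

end ZygmundWith

section R0

variable {E : Type*} [NormedAddCommGroup E] [InnerProductSpace ℝ E]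

def twoPointDiff (b : E → E) (x h k : E) : ℝ :=
  ⟪b (x + h) - b x, k⟫ - ⟪b (x + k) - b x, h⟫

lemma twoPointDiff_swap (b : E → E) (x h k : E) :
    twoPointDiff b x k h = -twoPointDiff b x h k := by
  simp only [twoPointDiff]
  ring

/-- `R0With C₀ b` says `‖b‖_{R₀} ≤ C₀`. -/
def R0With (C₀ : ℝ) (b : E → E) : Prop :=
  ∀ x h k : E, ‖h‖ = ‖k‖ → h ≠ 0 → |twoPointDiff b x h k| ≤ C₀ * ‖h‖ * ‖k‖

namespace R0With

variable {C₀ : ℝ} {b : E → E}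

lemma nonneg (hb : R0With C₀ b) (x : E) {h : E} (hh : h ≠ 0) : 0 ≤ C₀ := by
  have := hb x h h rfl hh
  rw [twoPointDiff, sub_self, abs_zero] at this
  exact nonneg_of_mul_nonneg_left (by simpa [mul_assoc] using this) (by positivity)

/-- `R₀ ⊂ Z`: the symmetric second difference along `a` is a combination of two `R₀` quotients
with increments `±a, ±c`. -/
lemma abs_inner_secondDiff_le (hb : R0With C₀ b) (y : E) {a c : E} (hac : ‖a‖ = ‖c‖) :
    |⟪b (y + a) + b (y - a) - 2 • b y, c⟫| ≤ 2 * C₀ * ‖a‖ * ‖c‖ := by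
  rcases eq_or_ne a 0 with rfl | ha
  · simp [two_smul]
  have hc : c ≠ 0 := norm_ne_zero_iff.1 (hac ▸ norm_ne_zero_iff.2 ha)
  have h₁ := hb y (-c) a (by rw [norm_neg, hac]) (neg_ne_zero.2 hc)
  have h₂ := hb y (-a) (-c) (by rw [norm_neg, norm_neg, hac]) (neg_ne_zero.2 ha)
  have hid : ⟪b (y + a) + b (y - a) - 2 • b y, c⟫ =
      twoPointDiff b y (-c) a - twoPointDiff b y (-a) (-c) := by
    simp only [twoPointDiff, inner_neg_right, ← sub_eq_add_neg, inner_sub_left, inner_add_left,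
      two_smul]
    ring
  rw [hid]
  simp only [norm_neg] at h₁ h₂
  linarith [abs_sub (twoPointDiff b y (-c) a) (twoPointDiff b y (-a) (-c))]

lemma zygmundWith_inner (hb : R0With C₀ b) (x : E) {u v : E} (hu : ‖u‖ = 1) (hv : ‖v‖ = 1) :
    ZygmundWith (2 * C₀) fun t => ⟪b (x + t • u) - b x, v⟫ := by
  intro p τ
  rcases eq_or_ne τ 0 with rfl | hτ
  · simp [← two_mul]
  have := hb.abs_inner_secondDiff_le (x + p • u) (a := τ • u) (c := τ • v)
    (by rw [norm_smul, norm_smul, hu, hv])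
  rw [norm_smul, norm_smul, hu, hv, Real.norm_eq_abs, real_inner_smul_right, abs_mul] at this
  have hid : ⟪b (x + p • u + τ • u) + b (x + p • u - τ • u) - 2 • b (x + p • u), v⟫ =
      ⟪b (x + (p + τ) • u) - b x, v⟫ + ⟪b (x + (p - τ) • u) - b x, v⟫
        - 2 * ⟪b (x + p • u) - b x, v⟫ := by
    rw [add_smul, sub_smul, ← add_assoc, ← add_sub_assoc]
    simp only [inner_sub_left, inner_add_left, two_smul]
    ring
  rw [hid] at this
  exact le_of_mul_le_mul_left (by linarith) (abs_pos.2 hτ)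

lemma abs_twoPointDiff_smul_le (hb : R0With C₀ b) (hbc : Continuous b) (x : E) {u v : E}
    (hu : ‖u‖ = 1) (hv : ‖v‖ = 1) {r s : ℝ} (hr : 0 < r) (hrs : r ≤ s) :
    |twoPointDiff b x (s • u) (r • v)| ≤ C₀ * (3 + 2 * Real.logb 2 (s / r)) * (s * r) := by
  have hs : 0 < s := hr.trans_le hrs
  set g : ℝ → ℝ := fun t => ⟪b (x + t • u) - b x, v⟫
  set H := ⟪b (x + r • v) - b x, u⟫
  have hratio : |g s / s - g r / r| ≤ 2 * C₀ * (1 + Real.logb 2 (s / r)) :=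
    (hb.zygmundWith_inner x hu hv).abs_div_sub_div_le_logb (by fun_prop) (by simp) hr hrs
  have hnorm (t : ℝ) (ht : 0 < t) (w : E) (hw : ‖w‖ = 1) : ‖t • w‖ = t := by
    rw [norm_smul, hw, Real.norm_of_nonneg ht.le, mul_one]
  have hmid : |r * g r - r * H| ≤ C₀ * r * r := by
    have := hb x (r • u) (r • v) (by rw [hnorm r hr u hu, hnorm r hr v hv])
      (norm_ne_zero_iff.1 (by rw [hnorm r hr u hu]; exact hr.ne'))
    rwa [twoPointDiff, hnorm r hr u hu, hnorm r hr v hv, real_inner_smul_right,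
      real_inner_smul_right] at this
  have hT : twoPointDiff b x (s • u) (r • v) =
      r * s * (g s / s - g r / r) + s / r * (r * g r - r * H) := by
    rw [twoPointDiff, real_inner_smul_right, real_inner_smul_right]
    field_simp
    ring
  rw [hT]
  calc _ ≤ |r * s * (g s / s - g r / r)| + |s / r * (r * g r - r * H)| := abs_add_le _ _
    _ = r * s * |g s / s - g r / r| + s / r * |r * g r - r * H| := by
      rw [abs_mul (r * s), abs_mul (s / r), abs_of_pos (by positivity : 0 < r * s),
        abs_of_pos (by positivity : 0 < s / r)]
    _ ≤ r * s * (2 * C₀ * (1 + Real.logb 2 (s / r))) + s / r * (C₀ * r * r) := by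
      gcongr
    _ = C₀ * (3 + 2 * Real.logb 2 (s / r)) * (s * r) := by
      field_simp
      ring

lemma abs_twoPointDiff_div_le (hb : R0With C₀ b) (hbc : Continuous b) (x : E) {h k : E}
    (hh : h ≠ 0) (hk : k ≠ 0) :
    |twoPointDiff b x h k| / (‖h‖ * ‖k‖) ≤ 4 * C₀ * (1 + |Real.log (‖h‖ / ‖k‖)|) := by
  wlog hkh : ‖k‖ ≤ ‖h‖ generalizing h k
  · have := this hk hh (le_of_not_ge hkh)
    rwa [twoPointDiff_swap, abs_neg, mul_comm ‖k‖, ← inv_div ‖h‖, Real.log_inv, abs_neg] at this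
  have hs : 0 < ‖h‖ := norm_pos_iff.2 hh
  have hr : 0 < ‖k‖ := norm_pos_iff.2 hk
  have hC₀ := hb.nonneg x hh
  have hunit {w : E} (hw : 0 < ‖w‖) : ‖‖w‖⁻¹ • w‖ = 1 := by
    rw [norm_smul, norm_inv, norm_norm, inv_mul_cancel₀ hw.ne']
  have hquot := hb.abs_twoPointDiff_smul_le hbc x (hunit hs) (hunit hr) hr hkh
  rw [smul_inv_smul₀ hs.ne', smul_inv_smul₀ hr.ne'] at hquot
  have hsr : 1 ≤ ‖h‖ / ‖k‖ := (one_le_div hr).2 hkh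
  have hlog := logb_two_le_two_mul_log hsr
  rw [div_le_iff₀ (by positivity), abs_of_nonneg (Real.log_nonneg hsr)]
  refine hquot.trans (mul_le_mul_of_nonneg_right ?_ (by positivity))
  nlinarith [Real.log_nonneg hsr]

end R0With

end R0

/-- If `b` is in the class `R₀`, then the two-point quantity for arbitrary
(not necessarily equal-length) increments `h, k` is bounded by
`C(n) ‖b‖_{R₀} (1 + |log(|h|/|k|)|)`. -/
theorem R0_log_estimate (n : ℕ) :
    ∃ C : ℝ, 0 < C ∧
      ∀ (b : EuclideanSpace ℝ (Fin n) → EuclideanSpace ℝ (Fin n)) (C₀ : ℝ),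
        Continuous b →
        (∀ (x h k : EuclideanSpace ℝ (Fin n)), ‖h‖ = ‖k‖ → h ≠ 0 →
          |⟪b (x + h) - b x, k⟫ - ⟪b (x + k) - b x, h⟫| ≤ C₀ * ‖h‖ * ‖k‖) →
        ∀ (x h k : EuclideanSpace ℝ (Fin n)), h ≠ 0 → k ≠ 0 →
          |⟪b (x + h) - b x, k⟫ - ⟪b (x + k) - b x, h⟫| / (‖h‖ * ‖k‖)
            ≤ C * C₀ * (1 + |Real.log (‖h‖ / ‖k‖)|) :=
  ⟨4, four_pos, fun _ _ hbc hb x _ _ hh hk =>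
    R0With.abs_twoPointDiff_div_le hb hbc x hh hk⟩
end

section
/- Let n ≥ 3 and let b : ℝ^n → ℝ^n be differentiable at x. Suppose that for every J in the set 𝒥_n ∪ {Id} of coordinate-plane rotation matrices together with the identity, one has |⟨Db(x)h, Jk⟩ − ⟨Db(x)k, Jh⟩| ≤ C₀ |h||k| for all h, k. Then |Db(x)| ≤ C(n) C₀ for a dimensional constant C(n); i.e. the full differential (not just its antisymmetric part) is controlled. -/
open scoped RealInnerProductSpace

/-!
The hypotheses are tested only on pairs of standard basis vectors. Writing `a p q` for the
entries of `Db(x)`, the identity gives `|a p q - a q p| ≤ C₀`, and `J_{i,j}` gives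
`|a i i + a j j| ≤ C₀` on `(e_i, e_j)` and `|a k i + a j k|, |a k j - a i k| ≤ C₀` on
`(e_i, e_k)`, `(e_j, e_k)`. With a third index available (`n ≥ 3`), the diagonal entries are
recovered from three pairwise sums and the off-diagonal ones from the last two bounds corrected
by the antisymmetric part. So every entry is at most `2 C₀`, and `‖Db(x)‖ ≤ 2 n² C₀`.
-/

/-- The coordinate-plane rotation `J_{i,j}` on `ℝⁿ`: `J e_i = −e_j`, `J e_j = e_i`,
and `J e_l = e_l` for `l ≠ i, j`.  In coordinates, `(Jx)_i = x_j`, `(Jx)_j = −x_i`,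
`(Jx)_l = x_l` otherwise. -/
noncomputable def Jmap (n : ℕ) (i j : Fin n) :
    EuclideanSpace ℝ (Fin n) → EuclideanSpace ℝ (Fin n) := fun x =>
  (EuclideanSpace.equiv (Fin n) ℝ).symm
    (fun l => if l = i then x j else if l = j then -(x i) else x l)

lemma exists_ne_ne_of_three_le_card {ι : Type*} [Fintype ι] (h : 3 ≤ Fintype.card ι)
    (p q : ι) : ∃ r, r ≠ p ∧ r ≠ q := by
  classical
  have : ({p, q}ᶜ : Finset ι).Nonempty := by
    rw [← Finset.card_pos, Finset.card_compl]
    have := Finset.card_le_two (a := p) (b := q)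
    omega
  obtain ⟨r, hr⟩ := this
  exact ⟨r, by simpa [not_or] using hr⟩

section Norm

open EuclideanSpace

variable {𝕜 ι : Type*} [RCLike 𝕜] [Fintype ι] [DecidableEq ι]

lemma EuclideanSpace.sum_smul_single (v : EuclideanSpace 𝕜 ι) :
    ∑ i, v i • single i (1 : 𝕜) = v := by
  simpa [basisFun_apply] using (basisFun ι 𝕜).sum_repr v

lemma EuclideanSpace.norm_le_sum_norm_apply (v : EuclideanSpace 𝕜 ι) :
    ‖v‖ ≤ ∑ i, ‖v i‖ :=
  calc ‖v‖ = ‖∑ i, v i • single i (1 : 𝕜)‖ := by rw [sum_smul_single]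
    _ ≤ ∑ i, ‖v i • single i (1 : 𝕜)‖ := norm_sum_le _ _
    _ = ∑ i, ‖v i‖ := by simp [norm_smul]

lemma ContinuousLinearMap.opNorm_le_sum_norm_apply_single {F : Type*} [NormedAddCommGroup F]
    [NormedSpace 𝕜 F] (A : EuclideanSpace 𝕜 ι →L[𝕜] F) :
    ‖A‖ ≤ ∑ i, ‖A (EuclideanSpace.single i (1 : 𝕜))‖ := by
  refine A.opNorm_le_bound (by positivity) fun v => ?_
  calc ‖A v‖ = ‖∑ i, v i • A (EuclideanSpace.single i (1 : 𝕜))‖ := by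
        conv_lhs => rw [← sum_smul_single v]
        simp [map_sum, map_smul]
    _ ≤ ∑ i, ‖v‖ * ‖A (EuclideanSpace.single i (1 : 𝕜))‖ := by
        refine (norm_sum_le _ _).trans (Finset.sum_le_sum fun i _ => ?_)
        rw [norm_smul]
        gcongr
        exact PiLp.norm_apply_le v i
    _ = (∑ i, ‖A (EuclideanSpace.single i (1 : 𝕜))‖) * ‖v‖ := by
        rw [← Finset.mul_sum, mul_comm]

lemma ContinuousLinearMap.opNorm_le_card_sq_mul_of_norm_apply_single_le
    (A : EuclideanSpace 𝕜 ι →L[𝕜] EuclideanSpace 𝕜 ι) {M : ℝ}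
    (hA : ∀ p q, ‖A (EuclideanSpace.single q (1 : 𝕜)) p‖ ≤ M) :
    ‖A‖ ≤ Fintype.card ι ^ 2 * M :=
  calc ‖A‖ ≤ ∑ q, ‖A (EuclideanSpace.single q (1 : 𝕜))‖ :=
        A.opNorm_le_sum_norm_apply_single
    _ ≤ ∑ _q : ι, ∑ _p : ι, M := Finset.sum_le_sum fun q _ =>
        (norm_le_sum_norm_apply _).trans (Finset.sum_le_sum fun p _ => hA p q)
    _ = Fintype.card ι ^ 2 * M := by simp [sq, mul_assoc]

end Norm

section EntryBounds

variable {ι : Type*} {a : ι → ι → ℝ} {C₀ : ℝ}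

lemma abs_diag_le_of_abs_add_le (hdiag : ∀ i j, i ≠ j → |a i i + a j j| ≤ C₀) {p q r : ι}
    (hqp : q ≠ p) (hrp : r ≠ p) (hrq : r ≠ q) : |a p p| ≤ 2 * C₀ := by
  have hpq := abs_le.mp (hdiag p q hqp.symm)
  have hpr := abs_le.mp (hdiag p r hrp.symm)
  have hqr := abs_le.mp (hdiag q r hrq.symm)
  rw [abs_le]
  constructor <;> linarith

lemma abs_entries_le_of_plane_bounds (hanti : ∀ p q, |a p q - a q p| ≤ C₀) {i j k : ι}
    (hi : |a k i + a j k| ≤ C₀) (hj : |a k j - a i k| ≤ C₀) :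
    |a k i| ≤ 2 * C₀ ∧ |a k j| ≤ 2 * C₀ := by
  have hik := abs_le.mp (hanti i k)
  have hjk := abs_le.mp (hanti j k)
  have hi' := abs_le.mp hi
  have hj' := abs_le.mp hj
  constructor <;> rw [abs_le] <;> constructor <;> linarith

lemma abs_entry_le_of_rotation_bounds [Fintype ι] [LinearOrder ι] (hι : 3 ≤ Fintype.card ι)
    (hanti : ∀ p q, |a p q - a q p| ≤ C₀)
    (hdiag : ∀ i j, i < j → |a i i + a j j| ≤ C₀)
    (hplane : ∀ i j k, i < j → k ≠ i → k ≠ j →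
      |a k i + a j k| ≤ C₀ ∧ |a k j - a i k| ≤ C₀)
    (p q : ι) : |a p q| ≤ 2 * C₀ := by
  obtain ⟨r, hrp, hrq⟩ := exists_ne_ne_of_three_le_card hι p q
  rcases eq_or_ne p q with rfl | hpq
  · obtain ⟨s, hsp, hsr⟩ := exists_ne_ne_of_three_le_card hι p r
    refine abs_diag_le_of_abs_add_le (fun i j hij => ?_) hrp hsp hsr
    rcases hij.lt_or_gt with h | h
    · exact hdiag i j h
    · rw [add_comm]; exact hdiag j i h
  rcases hrq.lt_or_gt with h | h
  · have := hplane r q p h hrp.symm hpq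
    exact (abs_entries_le_of_plane_bounds hanti this.1 this.2).2
  · have := hplane q r p h hpq hrp.symm
    exact (abs_entries_le_of_plane_bounds hanti this.1 this.2).1

end EntryBounds

section Rotations

variable {E : Type*} [NormedAddCommGroup E] [InnerProductSpace ℝ E]

def AntisymmPartBound (A : E →L[ℝ] E) (J : E → E) (C₀ : ℝ) : Prop :=
  ∀ h k : E, |⟪A h, J k⟫ - ⟪A k, J h⟫| ≤ C₀ * ‖h‖ * ‖k‖

lemma AntisymmPartBound.abs_le_of_norm_eq_one {A : E →L[ℝ] E} {J : E → E} {C₀ : ℝ}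
    (hA : AntisymmPartBound A J C₀) {u v : E} (hu : ‖u‖ = 1) (hv : ‖v‖ = 1) :
    |⟪A u, J v⟫ - ⟪A v, J u⟫| ≤ C₀ := by
  simpa [hu, hv] using hA u v

end Rotations

section Jmap

variable {n : ℕ} {i j k : Fin n}

lemma Jmap_apply (x : EuclideanSpace ℝ (Fin n)) (l : Fin n) :
    Jmap n i j x l = if l = i then x j else if l = j then -(x i) else x l := rfl

lemma Jmap_single_left (hij : i ≠ j) :
    Jmap n i j (EuclideanSpace.single i 1) = -EuclideanSpace.single j 1 := by
  ext l
  simp only [Jmap_apply, PiLp.single_apply, PiLp.neg_apply]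
  split_ifs <;> simp_all

lemma Jmap_single_right : Jmap n i j (EuclideanSpace.single j 1) = EuclideanSpace.single i 1 := by
  ext l
  simp only [Jmap_apply, PiLp.single_apply]
  split_ifs <;> simp_all

lemma Jmap_single_of_ne (hki : k ≠ i) (hkj : k ≠ j) :
    Jmap n i j (EuclideanSpace.single k 1) = EuclideanSpace.single k 1 := by
  ext l
  simp only [Jmap_apply, PiLp.single_apply]
  split_ifs <;> simp_all

end Jmap

theorem opNorm_le_of_antisymmPartBound {n : ℕ} (hn : 3 ≤ n)
    {A : EuclideanSpace ℝ (Fin n) →L[ℝ] EuclideanSpace ℝ (Fin n)} {C₀ : ℝ}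
    (hId : AntisymmPartBound A id C₀)
    (hJ : ∀ i j, i < j → AntisymmPartBound A (Jmap n i j) C₀) :
    ‖A‖ ≤ 2 * n ^ 2 * C₀ := by
  set e : Fin n → EuclideanSpace ℝ (Fin n) := fun p => EuclideanSpace.single p 1
  have he (p : Fin n) : ‖e p‖ = 1 := by simp [e]
  have hentry (p q : Fin n) : ⟪A (e q), e p⟫ = A (e q) p := by
    simp [e, EuclideanSpace.inner_single_right]
  have hanti (p q : Fin n) : |A (e q) p - A (e p) q| ≤ C₀ := by
    simpa [hentry] using hId.abs_le_of_norm_eq_one (he q) (he p)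
  have hdiag (i j : Fin n) (hij : i < j) : |A (e i) i + A (e j) j| ≤ C₀ := by
    have := (hJ i j hij).abs_le_of_norm_eq_one (he i) (he j)
    rwa [Jmap_single_right, Jmap_single_left hij.ne, inner_neg_right, hentry, hentry,
      sub_neg_eq_add] at this
  have hplane (i j k : Fin n) (hij : i < j) (hki : k ≠ i) (hkj : k ≠ j) :
      |A (e i) k + A (e k) j| ≤ C₀ ∧ |A (e j) k - A (e k) i| ≤ C₀ := by
    have hi := (hJ i j hij).abs_le_of_norm_eq_one (he i) (he k)
    have hj := (hJ i j hij).abs_le_of_norm_eq_one (he j) (he k)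
    rw [Jmap_single_of_ne hki hkj, Jmap_single_left hij.ne, inner_neg_right, hentry, hentry,
      sub_neg_eq_add] at hi
    rw [Jmap_single_of_ne hki hkj, Jmap_single_right, hentry, hentry] at hj
    exact ⟨hi, hj⟩
  have := A.opNorm_le_card_sq_mul_of_norm_apply_single_le fun p q =>
    (Real.norm_eq_abs _).trans_le <| abs_entry_le_of_rotation_bounds (a := fun p q => A (e q) p)
      (by simpa using hn) hanti hdiag hplane p q
  simpa [mul_assoc, mul_left_comm] using this

/-- For `n ≥ 3`, if `b` is differentiable at `x` and the rotated two-point bound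
holds for the identity and all coordinate-plane rotations `J_{i,j}`, `i < j`, then
the full differential is controlled: `|Db(x)| ≤ C(n) C₀`. -/
theorem rotations_control_full_differential (n : ℕ) (hn : 3 ≤ n) :
    ∃ C : ℝ, 0 < C ∧
      ∀ (b : EuclideanSpace ℝ (Fin n) → EuclideanSpace ℝ (Fin n))
        (x : EuclideanSpace ℝ (Fin n)) (C₀ : ℝ),
        DifferentiableAt ℝ b x →
        (∀ h k : EuclideanSpace ℝ (Fin n),
          |⟪fderiv ℝ b x h, k⟫ - ⟪fderiv ℝ b x k, h⟫| ≤ C₀ * ‖h‖ * ‖k‖) →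
        (∀ i j : Fin n, i < j → ∀ h k : EuclideanSpace ℝ (Fin n),
          |⟪fderiv ℝ b x h, Jmap n i j k⟫ - ⟪fderiv ℝ b x k, Jmap n i j h⟫|
            ≤ C₀ * ‖h‖ * ‖k‖) →
        ‖fderiv ℝ b x‖ ≤ C * C₀ :=
  ⟨2 * n ^ 2, by positivity, fun _ _ _ _ hId hJ => opNorm_le_of_antisymmPartBound hn hId hJ⟩
end
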